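/- arXiv:2602.10821 — 2 statements merged into one kernel-verified Lean document; each statement's English description precedes it below -/
import Mathlib

section
/- Fix a posterior p ∈ [0,1]. Define Ψ(p,q) = u_f(p) + 𝟙{p ≥ π(q)} · Δ(p) − k_V · C(q) for q ∈ [0,1], where π : [0,1] → [π_L, π_H] is continuous and strictly decreasing with π(0) = π_H and π(1) = π_L, C : [0,1] → ℝ≥0 is increasing with C(0) = 0, Δ(p) ≥ 0, and k_V ≥ 0. For p ∈ [π_L, π_H] let q_min(p) = inf{q ∈ [0,1] : p ≥ π(q)}. Then: (a) if p < π_L or p ≥ π_H, the map q ↦ Ψ(p,q) is maximized at q = 0; (b) if p ∈ [π_L, π_H), the maximum of Ψ(p,·) over [0,1] equals u_f(p) + max{0, Δ(p) − k_V·C(q_min(p))}, attained at q = 0 when Δ(p) ≤ k_V·C(q_min(p)) and at q = q_min(p) when Δ(p) > k_V·C(q_min(p)). -/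
open Set

/-- bang-bang structure of optimal bias management at a fixed posterior. -/
theorem stmt1
    (p πL πH uf Δp kV : ℝ) (πf C : ℝ → ℝ)
    (hπL : 0 < πL) (hLH : πL < πH) (hπH : πH < 1)
    (hπcont : ContinuousOn πf (Set.Icc (0:ℝ) 1))
    (hπanti : StrictAntiOn πf (Set.Icc (0:ℝ) 1))
    (hπrange : ∀ q ∈ Set.Icc (0:ℝ) 1, πf q ∈ Set.Icc πL πH)
    (hπ0 : πf 0 = πH) (hπ1 : πf 1 = πL)
    (hCmono : MonotoneOn C (Set.Icc (0:ℝ) 1))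
    (hC0 : C 0 = 0) (hCpos : ∀ q ∈ Set.Icc (0:ℝ) 1, 0 ≤ C q)
    (hΔ : 0 ≤ Δp) (hkV : 0 ≤ kV)
    (Ψ : ℝ → ℝ)
    (hΨ : ∀ q, Ψ q = uf + (if πf q ≤ p then Δp else 0) - kV * C q)
    (qmin : ℝ)
    (hqmin : qmin = sInf {q ∈ Set.Icc (0:ℝ) 1 | πf q ≤ p}) :
    -- (a): outside the conflict region, q = 0 is optimal
    ((p < πL ∨ πH ≤ p) → ∀ q ∈ Set.Icc (0:ℝ) 1, Ψ q ≤ Ψ 0) ∧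
    -- (b): in the conflict region, the max is uf + max{0, Δp − kV·C(qmin)},
    -- attained at 0 or at qmin according to the threshold comparison
    (p ∈ Set.Ico πL πH →
      (∀ q ∈ Set.Icc (0:ℝ) 1, Ψ q ≤ uf + max 0 (Δp - kV * C qmin)) ∧
      (Δp ≤ kV * C qmin → Ψ 0 = uf + max 0 (Δp - kV * C qmin)) ∧
      (kV * C qmin < Δp → Ψ qmin = uf + max 0 (Δp - kV * C qmin))) := by
  have h01 : (0:ℝ) ∈ Set.Icc (0:ℝ) 1 := ⟨le_refl 0, by norm_num⟩
  have h11 : (1:ℝ) ∈ Set.Icc (0:ℝ) 1 := ⟨by norm_num, le_refl 1⟩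
  have hkC : ∀ q ∈ Set.Icc (0:ℝ) 1, 0 ≤ kV * C q := fun q hq =>
    mul_nonneg hkV (hCpos q hq)
  constructor
  · rintro (hp | hp) q hq
    · have hno : ¬ πf q ≤ p := by
        have := (hπrange q hq).1
        linarith
      have hno0 : ¬ πf 0 ≤ p := by rw [hπ0]; linarith
      rw [hΨ q, hΨ 0, if_neg hno, if_neg hno0, hC0]
      have := hkC q hq
      linarith
    · have hyes : πf q ≤ p := le_trans (hπrange q hq).2 hp
      have hyes0 : πf 0 ≤ p := by rw [hπ0]; exact hp
      rw [hΨ q, hΨ 0, if_pos hyes, if_pos hyes0, hC0]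
      have := hkC q hq
      linarith
  · rintro ⟨hpL, hpH⟩
    set S := {q ∈ Set.Icc (0:ℝ) 1 | πf q ≤ p} with hS
    have hSne : S.Nonempty := ⟨1, h11, by rw [hπ1]; exact hpL⟩
    have hSbdd : BddBelow S := ⟨0, fun q hq => hq.1.1⟩
    have hSclosed : IsClosed S := by
      have : S = Set.Icc (0:ℝ) 1 ∩ πf ⁻¹' Set.Iic p := by
        ext q; simp [hS, Set.mem_setOf_eq, and_comm]
      rw [this]
      exact hπcont.preimage_isClosed_of_isClosed isClosed_Icc isClosed_Iic
    have hqS : qmin ∈ S := hqmin ▸ hSclosed.csInf_mem hSne hSbdd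
    have hq01 : qmin ∈ Set.Icc (0:ℝ) 1 := hqS.1
    have hqflip : πf qmin ≤ p := hqS.2
    have h0no : ¬ πf 0 ≤ p := by rw [hπ0]; linarith
    have hle : ∀ q ∈ Set.Icc (0:ℝ) 1, πf q ≤ p → C qmin ≤ C q := by
      intro q hq hqp
      exact hCmono hq01 hq (hqmin ▸ csInf_le hSbdd ⟨hq, hqp⟩)
    refine ⟨?_, ?_, ?_⟩
    · intro q hq
      rw [hΨ q]
      by_cases hqp : πf q ≤ p
      · rw [if_pos hqp]
        have h1 : kV * C qmin ≤ kV * C q := mul_le_mul_of_nonneg_left (hle q hq hqp) hkV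
        have := le_max_right (0:ℝ) (Δp - kV * C qmin)
        linarith
      · rw [if_neg hqp]
        have := hkC q hq
        have := le_max_left (0:ℝ) (Δp - kV * C qmin)
        linarith
    · intro h
      rw [hΨ 0, if_neg h0no, hC0, max_eq_left (by linarith)]
      ring
    · intro h
      rw [hΨ qmin, if_pos hqflip, max_eq_right (by linarith)]
      ring
end

section
/- Let g : [0,1] → ℝ be upper semicontinuous and bounded, p₀ ∈ (0,1), and cav g its least concave majorant. Then there exist p₋ ≤ p₀ ≤ p₊ in [0,1] and α ∈ [0,1] with α·p₋ + (1−α)·p₊ = p₀ such that α·g(p₋) + (1−α)·g(p₊) = (cav g)(p₀). In particular, the supremum of ∫ g dτ over probability measures τ on [0,1] with mean p₀ is attained by a measure supported on at most two points. -/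
open MeasureTheory Set

/-- The least concave majorant (concavification) of `g` on `[0,1]`. -/
noncomputable def cav (g : ℝ → ℝ) (x : ℝ) : ℝ :=
  sInf {y : ℝ | ∃ h : ℝ → ℝ, ConcaveOn ℝ (Set.Icc (0:ℝ) 1) h ∧
    (∀ z ∈ Set.Icc (0:ℝ) 1, g z ≤ h z) ∧ y = h x}

/-- A lower semicontinuous function on a nonempty compact set attains its minimum. -/
private lemma lsc_exists_min {K : Set ℝ} (hK : IsCompact K) (hne : K.Nonempty)
    {F : ℝ → ℝ} (hF : LowerSemicontinuousOn F K) (B : ℝ) (hB : ∀ x ∈ K, B ≤ F x) :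
    ∃ a ∈ K, ∀ x ∈ K, F a ≤ F x := by
  set m := sInf (F '' K) with hm
  have hKim : (F '' K).Nonempty := hne.image F
  have hbdd : BddBelow (F '' K) := ⟨B, by rintro y ⟨x, hx, rfl⟩; exact hB x hx⟩
  have hseq : ∀ n : ℕ, ∃ x, x ∈ K ∧ F x < m + 1 / (n + 1) := by
    intro n
    have hlt : m < m + 1 / (n + 1 : ℝ) := by
      have : (0:ℝ) < 1 / (n + 1 : ℝ) := by positivity
      linarith
    obtain ⟨y, ⟨x, hx, rfl⟩, hy⟩ := exists_lt_of_csInf_lt hKim hlt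
    exact ⟨x, hx, hy⟩
  choose x hxK hxlt using hseq
  obtain ⟨a, haK, φ, hφ, hconv⟩ := hK.tendsto_subseq hxK
  refine ⟨a, haK, ?_⟩
  have hFa : F a ≤ m := by
    by_contra hlt
    push_neg at hlt
    have hy : (m + F a) / 2 < F a := by linarith
    have hev1 := hF a haK _ hy
    have htend : Filter.Tendsto (fun n => x (φ n)) Filter.atTop (nhdsWithin a K) :=
      tendsto_nhdsWithin_of_tendsto_nhds_of_eventually_within _ hconv
        (Filter.Eventually.of_forall fun n => hxK _)
    have hev1' := htend.eventually hev1
    have h1n : Filter.Tendsto (fun n : ℕ => m + 1 / ((φ n : ℝ) + 1)) Filter.atTop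
        (nhds (m + 0)) := by
      exact Filter.Tendsto.add tendsto_const_nhds
        (tendsto_one_div_add_atTop_nhds_zero_nat.comp hφ.tendsto_atTop)
    have hev2 : ∀ᶠ n in Filter.atTop, m + 1 / ((φ n : ℝ) + 1) < (m + F a) / 2 := by
      apply h1n.eventually_lt_const
      linarith
    obtain ⟨n, h1, h2⟩ := (hev1'.and hev2).exists
    have h3 := hxlt (φ n)
    linarith
  intro z hz
  exact hFa.trans (csInf_le hbdd ⟨z, hz, rfl⟩)

/-- Three point slope inequality for concave functions. -/
private lemma slope3 {h : ℝ → ℝ} (hcon : ConcaveOn ℝ (Icc (0:ℝ) 1) h) {y p x : ℝ}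
    (hy : y ∈ Icc (0:ℝ) 1) (hx : x ∈ Icc (0:ℝ) 1) (h1 : y < p) (h2 : p < x) :
    (h x - h p) / (x - p) ≤ (h p - h y) / (p - y) := by
  have hyx : y < x := h1.trans h2
  set t := (x - p) / (x - y) with ht
  have hxy : (0:ℝ) < x - y := by linarith
  have ht0 : 0 ≤ t := div_nonneg (by linarith) (by linarith)
  have ht1 : 0 ≤ 1 - t := by
    rw [sub_nonneg, ht]
    exact div_le_one_of_le₀ (by linarith) (by linarith)
  have hcomb := hcon.2 hy hx ht0 ht1 (by ring)
  simp only [smul_eq_mul] at hcomb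
  have hpt : t * y + (1 - t) * x = p := by
    have e : t * (x - y) = x - p := by rw [ht]; exact div_mul_cancel₀ _ hxy.ne'
    linarith
  rw [hpt] at hcomb
  have e1 : t * (x - y) = x - p := by rw [ht]; exact div_mul_cancel₀ _ hxy.ne'
  have e2 : (1 - t) * (x - y) = p - y := by linarith [e1]
  have key : (x - p) * h y + (p - y) * h x ≤ (x - y) * h p := by
    have h5 := mul_le_mul_of_nonneg_right hcomb hxy.le
    calc (x - p) * h y + (p - y) * h x
        = (t * (x - y)) * h y + ((1 - t) * (x - y)) * h x := by rw [e1, e2]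
      _ = (t * h y + (1 - t) * h x) * (x - y) := by ring
      _ ≤ h p * (x - y) := h5
      _ = (x - y) * h p := by ring
  rw [div_le_div_iff₀ (by linarith) (by linarith)]
  nlinarith [key]

/-- Existence of a supporting line for a concave function at an interior point. -/
private lemma support_slope {h : ℝ → ℝ} (hcon : ConcaveOn ℝ (Icc (0:ℝ) 1) h) {p₀ : ℝ}
    (hp : p₀ ∈ Ioo (0:ℝ) 1) :
    ∃ s : ℝ, ∀ x ∈ Icc (0:ℝ) 1, h x ≤ h p₀ + s * (x - p₀) := by
  obtain ⟨hp0, hp1⟩ := hp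
  set T := (fun y => (h p₀ - h y) / (p₀ - y)) '' (Ico (0:ℝ) p₀) with hT
  have hTne : T.Nonempty := ⟨_, ⟨0, ⟨le_refl _, hp0⟩, rfl⟩⟩
  have hp₀mem : p₀ ∈ Icc (0:ℝ) 1 := ⟨hp0.le, hp1.le⟩
  have hTbdd : BddBelow T := by
    refine ⟨(h 1 - h p₀) / (1 - p₀), ?_⟩
    rintro v ⟨y, hy, rfl⟩
    exact slope3 hcon ⟨hy.1, by linarith [hy.2]⟩ ⟨by linarith, le_refl _⟩ hy.2 hp1
  set s := sInf T with hs
  refine ⟨s, fun x hx => ?_⟩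
  rcases lt_trichotomy x p₀ with hlt | heq | hgt
  · have hsle : s ≤ (h p₀ - h x) / (p₀ - x) := csInf_le hTbdd ⟨x, ⟨hx.1, hlt⟩, rfl⟩
    have hd : (0:ℝ) < p₀ - x := by linarith
    rw [le_div_iff₀ hd] at hsle
    nlinarith
  · rw [heq]; simp
  · have hsle : (h x - h p₀) / (x - p₀) ≤ s := by
      apply le_csInf hTne
      rintro v ⟨y, hy, rfl⟩
      exact slope3 hcon ⟨hy.1, by linarith [hy.2]⟩ hx hy.2 hgt
    rw [div_le_iff₀ (by linarith)] at hsle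
    linarith

/-- Affine functions are concave on `[0,1]`. -/
private lemma affine_concave (a b d : ℝ) :
    ConcaveOn ℝ (Icc (0:ℝ) 1) (fun x => a + b * (x - d)) := by
  refine ⟨convex_Icc _ _, ?_⟩
  intro x _ y _ t u ht hu hsum
  have hu' : u = 1 - t := by linarith
  subst hu'
  simp only [smul_eq_mul]
  apply le_of_eq
  ring

/-- Pointwise lower bound for `x ↦ c + s(x-p₀) - g x` on a subinterval of `[0,1]`. -/
private lemma line_sub_lower {g : ℝ → ℝ} {M : ℝ} (hbd : ∀ p ∈ Icc (0:ℝ) 1, |g p| ≤ M)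
    {J : Set ℝ} (hJ : J ⊆ Icc (0:ℝ) 1) (hp₀ : p₀ ∈ Icc (0:ℝ) 1) (c s : ℝ) :
    ∀ x ∈ J, c - |s| - M ≤ c + s * (x - p₀) - g x := by
  intro x hx
  have hx' := hJ hx
  have h1 : |x - p₀| ≤ 1 := by
    rw [abs_le]
    constructor <;> [linarith [hx'.1, hp₀.2]; linarith [hx'.2, hp₀.1]]
  have h2 : |s * (x - p₀)| ≤ |s| := by
    rw [abs_mul]
    exact mul_le_of_le_one_right (abs_nonneg _) h1
  have h3 := (abs_le.1 (hbd x hx')).2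
  have h4 := neg_abs_le (s * (x - p₀))
  linarith

private lemma inf_line_bdd {g : ℝ → ℝ} {M : ℝ} (hbd : ∀ p ∈ Icc (0:ℝ) 1, |g p| ≤ M)
    {J : Set ℝ} (hJ : J ⊆ Icc (0:ℝ) 1) (hp₀ : p₀ ∈ Icc (0:ℝ) 1) (c s : ℝ) :
    BddBelow ((fun x => c + s * (x - p₀) - g x) '' J) := by
  refine ⟨c - |s| - M, ?_⟩
  rintro y ⟨x, hx, rfl⟩
  exact line_sub_lower hbd hJ hp₀ c s x hx

private lemma inf_line_lip {g : ℝ → ℝ} {M : ℝ} (hbd : ∀ p ∈ Icc (0:ℝ) 1, |g p| ≤ M)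
    {J : Set ℝ} (hJne : J.Nonempty) (hJ : J ⊆ Icc (0:ℝ) 1) (hp₀ : p₀ ∈ Icc (0:ℝ) 1)
    (c s s' : ℝ) :
    sInf ((fun x => c + s * (x - p₀) - g x) '' J)
      ≤ sInf ((fun x => c + s' * (x - p₀) - g x) '' J) + |s - s'| := by
  rw [← sub_le_iff_le_add]
  apply le_csInf (hJne.image _)
  rintro y ⟨x, hx, rfl⟩
  show sInf ((fun x => c + s * (x - p₀) - g x) '' J) - |s - s'| ≤ c + s' * (x - p₀) - g x
  have h1 : sInf ((fun x => c + s * (x - p₀) - g x) '' J) ≤ c + s * (x - p₀) - g x :=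
    csInf_le (inf_line_bdd hbd hJ hp₀ c s) ⟨x, hx, rfl⟩
  have hx' := hJ hx
  have habs : |x - p₀| ≤ 1 := by
    rw [abs_le]
    constructor <;> [linarith [hx'.1, hp₀.2]; linarith [hx'.2, hp₀.1]]
  have h2 : |(s - s') * (x - p₀)| ≤ |s - s'| := by
    rw [abs_mul]
    exact mul_le_of_le_one_right (abs_nonneg _) habs
  have h3 := (abs_le.1 h2).2
  have : s * (x - p₀) ≤ s' * (x - p₀) + |s - s'| := by nlinarith
  linarith

/-- A line minus an usc function is lsc. -/
private lemma lsc_line_sub {g : ℝ → ℝ} {K : Set ℝ} (husc : UpperSemicontinuousOn g K)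
    (c s p₀ : ℝ) :
    LowerSemicontinuousOn (fun x => c + s * (x - p₀) - g x) K := by
  have h1 : LowerSemicontinuousOn (fun x => -g x) K := by
    intro x hx y hy
    have hy' : y < -g x := hy
    have := husc x hx (-y) (by linarith)
    filter_upwards [this] with z hz
    show y < -g z
    linarith
  have h2 : LowerSemicontinuousOn (fun x => c + s * (x - p₀)) K :=
    (Continuous.lowerSemicontinuous
      (continuous_const.add (continuous_const.mul (continuous_id.sub continuous_const)))).lowerSemicontinuousOn K
  simpa [sub_eq_add_neg] using h2.add h1

/-- Integral of a function against a two-point measure. -/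
private lemma integral_two_point (f : ℝ → ℝ) (pm pp α : ℝ) (hα0 : 0 ≤ α) (hα1 : α ≤ 1) :
    ∫ p, f p ∂((ENNReal.ofReal α) • Measure.dirac pm
        + (ENNReal.ofReal (1 - α)) • Measure.dirac pp)
      = α * f pm + (1 - α) * f pp := by
  have hi1 : Integrable f (Measure.dirac pm) :=
    (integrable_const (f pm)).congr (MeasureTheory.ae_eq_dirac f).symm
  have hi2 : Integrable f (Measure.dirac pp) :=
    (integrable_const (f pp)).congr (MeasureTheory.ae_eq_dirac f).symm
  rw [integral_add_measure (hi1.smul_measure ENNReal.ofReal_ne_top)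
      (hi2.smul_measure ENNReal.ofReal_ne_top),
    integral_smul_measure, integral_smul_measure, integral_dirac, integral_dirac,
    ENNReal.toReal_ofReal hα0, ENNReal.toReal_ofReal (by linarith : (0:ℝ) ≤ 1 - α)]
  simp [smul_eq_mul]

/-- achievability of the concavification value by a binary
mixture of posteriors (a supporting chord at the prior), and hence by a
Bayes-plausible measure supported on at most two points. -/
theorem stmt5
    (g : ℝ → ℝ)
    (husc : UpperSemicontinuousOn g (Set.Icc (0:ℝ) 1))
    (M : ℝ) (hbd : ∀ p ∈ Set.Icc (0:ℝ) 1, |g p| ≤ M)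
    (p₀ : ℝ) (hp₀ : p₀ ∈ Set.Ioo (0:ℝ) 1) :
    ∃ pm pp α : ℝ,
      pm ∈ Set.Icc (0:ℝ) 1 ∧ pp ∈ Set.Icc (0:ℝ) 1 ∧
      pm ≤ p₀ ∧ p₀ ≤ pp ∧ α ∈ Set.Icc (0:ℝ) 1 ∧
      α * pm + (1 - α) * pp = p₀ ∧
      α * g pm + (1 - α) * g pp = cav g p₀ ∧
      -- in particular: attainment by a two-point Bayes-plausible measure
      (∃ τ : Measure ℝ,
        τ = (ENNReal.ofReal α) • Measure.dirac pm
              + (ENNReal.ofReal (1 - α)) • Measure.dirac pp ∧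
        IsProbabilityMeasure τ ∧ τ (Set.Icc (0:ℝ) 1)ᶜ = 0 ∧
        (∫ p, p ∂τ) = p₀ ∧ (∫ p, g p ∂τ) = cav g p₀) := by
  obtain ⟨hp0, hp1⟩ := hp₀
  have hp₀I : p₀ ∈ Icc (0:ℝ) 1 := ⟨hp0.le, hp1.le⟩
  set c := cav g p₀ with hcdef
  set Hset := {y : ℝ | ∃ h : ℝ → ℝ, ConcaveOn ℝ (Set.Icc (0:ℝ) 1) h ∧
    (∀ z ∈ Set.Icc (0:ℝ) 1, g z ≤ h z) ∧ y = h p₀} with hHdef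
  have hcS : c = sInf Hset := rfl
  have hMmem : M ∈ Hset := ⟨fun _ => M, concaveOn_const _ (convex_Icc _ _),
    fun z hz => (abs_le.1 (hbd z hz)).2, rfl⟩
  have hbddH : BddBelow Hset := by
    refine ⟨g p₀, ?_⟩
    rintro y ⟨h, _, hmaj, rfl⟩
    exact hmaj p₀ hp₀I
  have hHne : Hset.Nonempty := ⟨M, hMmem⟩
  have hcle : ∀ h : ℝ → ℝ, ConcaveOn ℝ (Icc (0:ℝ) 1) h → (∀ z ∈ Icc (0:ℝ) 1, g z ≤ h z) →
      c ≤ h p₀ := fun h h1 h2 => csInf_le hbddH ⟨h, h1, h2, rfl⟩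
  have hgc : g p₀ ≤ c := by
    rw [hcS]
    apply le_csInf hHne
    rintro y ⟨h, _, hmaj, rfl⟩
    exact hmaj p₀ hp₀I
  have hgM : -M ≤ g p₀ := (abs_le.1 (hbd p₀ hp₀I)).1
  -- Step 1: existence of approximate supporting lines at level close to c
  have hline : ∀ ε : ℝ, 0 < ε → ∃ s cε : ℝ, c ≤ cε ∧ cε < c + ε ∧
      ∀ x ∈ Icc (0:ℝ) 1, g x ≤ cε + s * (x - p₀) := by
    intro ε hε
    have hlt : sInf Hset < c + ε := by rw [← hcS]; linarith
    obtain ⟨y, hyH, hy⟩ := exists_lt_of_csInf_lt hHne hlt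
    obtain ⟨h, hcon, hmaj, rfl⟩ := hyH
    obtain ⟨s, hsupp⟩ := support_slope hcon ⟨hp0, hp1⟩
    exact ⟨s, h p₀, hcle h hcon hmaj, hy,
      fun x hx => (hmaj x hx).trans (hsupp x hx)⟩
  -- Step 2: the set of slopes of exact supporting lines through (p₀, c)
  set S := {s : ℝ | ∀ x ∈ Icc (0:ℝ) 1, g x ≤ c + s * (x - p₀)} with hSdef
  have hSne : S.Nonempty := by
    have hseq : ∀ n : ℕ, ∃ s : ℝ, ∀ x ∈ Icc (0:ℝ) 1,
        g x ≤ c + 1 / (n + 1) + s * (x - p₀) := by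
      intro n
      obtain ⟨s, cε, h1, h2, h3⟩ := hline (1 / (n + 1)) (by positivity)
      exact ⟨s, fun x hx => (h3 x hx).trans (by linarith)⟩
    choose sn hsn using hseq
    set lb := (-M - c - 1) / (1 - p₀) with hlb
    set ub := (c + M + 1) / p₀ with hub
    have hsnmem : ∀ n, sn n ∈ Icc lb ub := by
      intro n
      have h0 := hsn n 0 ⟨le_refl _, zero_le_one⟩
      have h1' := hsn n 1 ⟨zero_le_one, le_refl _⟩
      have hg0 := abs_le.1 (hbd 0 ⟨le_refl _, zero_le_one⟩)
      have hg1 := abs_le.1 (hbd 1 ⟨zero_le_one, le_refl _⟩)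
      have hn1 : 1 / ((n:ℝ) + 1) ≤ 1 := by
        rw [div_le_one (by positivity)]
        simp
      constructor
      · rw [hlb, div_le_iff₀ (by linarith)]
        nlinarith
      · rw [hub, le_div_iff₀ hp0]
        nlinarith
    obtain ⟨s, _, φ, hφ, hconv⟩ := (isCompact_Icc).tendsto_subseq hsnmem
    refine ⟨s, fun x hx => ?_⟩
    have hall : ∀ n, g x ≤ c + 1 / ((φ n : ℝ) + 1) + sn (φ n) * (x - p₀) :=
      fun n => hsn (φ n) x hx
    have hlim : Filter.Tendsto (fun n => c + 1 / ((φ n : ℝ) + 1) + sn (φ n) * (x - p₀))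
        Filter.atTop (nhds (c + 0 + s * (x - p₀))) := by
      exact (Filter.Tendsto.add tendsto_const_nhds
        (tendsto_one_div_add_atTop_nhds_zero_nat.comp hφ.tendsto_atTop)).add
        (hconv.mul tendsto_const_nhds)
    have := ge_of_tendsto hlim (Filter.Eventually.of_forall hall)
    simpa using this
  have hSbddB : BddBelow S := by
    refine ⟨(-M - c) / (1 - p₀), ?_⟩
    intro s hs
    have h1 := hs 1 ⟨zero_le_one, le_refl _⟩
    have hg1 := (abs_le.1 (hbd 1 ⟨zero_le_one, le_refl _⟩)).1
    rw [div_le_iff₀ (by linarith)]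
    nlinarith
  have hSbddA : BddAbove S := by
    refine ⟨(c + M) / p₀, ?_⟩
    intro s hs
    have h0 := hs 0 ⟨le_refl _, zero_le_one⟩
    have hg0 := (abs_le.1 (hbd 0 ⟨le_refl _, zero_le_one⟩)).1
    rw [le_div_iff₀ hp0]
    nlinarith
  have hSclosed : IsClosed S := by
    have : S = ⋂ x ∈ Icc (0:ℝ) 1, {s : ℝ | g x ≤ c + s * (x - p₀)} := by
      ext s; simp [hSdef]
    rw [this]
    exact isClosed_biInter fun x _ =>
      isClosed_le continuous_const
        (continuous_const.add (continuous_id.mul continuous_const))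
  -- Φ and Ψ : minimal gaps on the left and right of p₀
  set Φ := fun s : ℝ => sInf ((fun x => c + s * (x - p₀) - g x) '' Icc 0 p₀) with hΦdef
  set Ψ := fun s : ℝ => sInf ((fun x => c + s * (x - p₀) - g x) '' Icc p₀ 1) with hΨdef
  have hJL : Icc (0:ℝ) p₀ ⊆ Icc (0:ℝ) 1 := Icc_subset_Icc (le_refl _) hp1.le
  have hJR : Icc p₀ (1:ℝ) ⊆ Icc (0:ℝ) 1 := Icc_subset_Icc hp0.le (le_refl _)
  have hJLne : (Icc (0:ℝ) p₀).Nonempty := nonempty_Icc.2 hp0.le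
  have hJRne : (Icc p₀ (1:ℝ)).Nonempty := nonempty_Icc.2 hp1.le
  have hΦnn : ∀ s ∈ S, 0 ≤ Φ s := by
    intro s hs
    apply le_csInf (hJLne.image _)
    rintro y ⟨x, hx, rfl⟩
    have := hs x (hJL hx)
    show 0 ≤ c + s * (x - p₀) - g x
    linarith
  have hΨnn : ∀ s ∈ S, 0 ≤ Ψ s := by
    intro s hs
    apply le_csInf (hJRne.image _)
    rintro y ⟨x, hx, rfl⟩
    have := hs x (hJR hx)
    show 0 ≤ c + s * (x - p₀) - g x
    linarith
  have hΦle : ∀ s, ∀ x ∈ Icc (0:ℝ) p₀, Φ s ≤ c + s * (x - p₀) - g x :=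
    fun s x hx => csInf_le (inf_line_bdd hbd hJL hp₀I c s) ⟨x, hx, rfl⟩
  have hΨle : ∀ s, ∀ x ∈ Icc p₀ (1:ℝ), Ψ s ≤ c + s * (x - p₀) - g x :=
    fun s x hx => csInf_le (inf_line_bdd hbd hJR hp₀I c s) ⟨x, hx, rfl⟩
  have hΦlip : ∀ s s', Φ s ≤ Φ s' + |s - s'| :=
    fun s s' => inf_line_lip hbd hJLne hJL hp₀I c s s'
  have hΨlip : ∀ s s', Ψ s ≤ Ψ s' + |s - s'| :=
    fun s s' => inf_line_lip hbd hJRne hJR hp₀I c s s'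
  -- dichotomy : on S, Φ or Ψ vanishes
  have hdichot : ∀ s ∈ S, Φ s = 0 ∨ Ψ s = 0 := by
    intro s hs
    by_contra hcon
    push_neg at hcon
    obtain ⟨h1, h2⟩ := hcon
    have hΦpos : 0 < Φ s := lt_of_le_of_ne (hΦnn s hs) (Ne.symm h1)
    have hΨpos : 0 < Ψ s := lt_of_le_of_ne (hΨnn s hs) (Ne.symm h2)
    set ε := min (Φ s) (Ψ s) with hεdef
    have hε : 0 < ε := lt_min hΦpos hΨpos
    have hmaj : ∀ x ∈ Icc (0:ℝ) 1, g x ≤ (c - ε) + s * (x - p₀) := by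
      intro x hx
      rcases le_total x p₀ with hle | hge
      · have := hΦle s x ⟨hx.1, hle⟩
        have := min_le_left (Φ s) (Ψ s)
        linarith
      · have := hΨle s x ⟨hge, hx.2⟩
        have := min_le_right (Φ s) (Ψ s)
        linarith
    have := hcle (fun x => (c - ε) + s * (x - p₀)) (affine_concave _ _ _) hmaj
    simp only [sub_self, mul_zero, add_zero] at this
    linarith
  -- extreme slopes
  set sm := sInf S with hsm
  set sp := sSup S with hsp
  have hsmS : sm ∈ S := hSclosed.csInf_mem hSne hSbddB
  have hspS : sp ∈ S := hSclosed.csSup_mem hSne hSbddA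
  have hsmsp : sm ≤ sp := csInf_le_csSup hSne hSbddB hSbddA
  have hIccS : Icc sm sp ⊆ S := by
    rintro s ⟨h1, h2⟩ x hx
    rcases le_total x p₀ with hle | hge
    · have := hspS x hx
      nlinarith
    · have := hsmS x hx
      nlinarith
  -- Ψ vanishes at the minimal slope
  have hΨsm : Ψ sm = 0 := by
    rcases eq_or_lt_of_le (hΨnn sm hsmS) with h | h
    · exact h.symm
    · exfalso
      have hmemS : sm - Ψ sm ∈ S := by
        intro x hx
        rcases le_total x p₀ with hle | hge
        · have := hsmS x hx
          nlinarith
        · have := hΨle sm x ⟨hge, hx.2⟩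
          nlinarith [hx.2]
      have := csInf_le hSbddB hmemS
      rw [← hsm] at this
      linarith
  -- Φ vanishes at the maximal slope
  have hΦsp : Φ sp = 0 := by
    rcases eq_or_lt_of_le (hΦnn sp hspS) with h | h
    · exact h.symm
    · exfalso
      have hmemS : sp + Φ sp ∈ S := by
        intro x hx
        rcases le_total x p₀ with hle | hge
        · have := hΦle sp x ⟨hx.1, hle⟩
          nlinarith [hx.1]
        · have := hspS x hx
          nlinarith
      have := le_csSup hSbddA hmemS
      rw [← hsp] at this
      linarith
  -- the pivotal slope σ : supremum of slopes in [sm, sp] where Ψ vanishes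
  set Z := {s : ℝ | s ∈ Icc sm sp ∧ Ψ s = 0} with hZdef
  have hZne : Z.Nonempty := ⟨sm, ⟨le_refl _, hsmsp⟩, hΨsm⟩
  have hZbdd : BddAbove Z := ⟨sp, fun z hz => hz.1.2⟩
  set σ := sSup Z with hσdef
  have hσmem : σ ∈ Icc sm sp := by
    constructor
    · exact le_csSup hZbdd ⟨⟨le_refl _, hsmsp⟩, hΨsm⟩
    · exact csSup_le hZne fun z hz => hz.1.2
  have hσS : σ ∈ S := hIccS hσmem
  have hΨσ : Ψ σ = 0 := by
    have hle : ∀ ε : ℝ, 0 < ε → Ψ σ ≤ ε := by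
      intro ε hε
      obtain ⟨z, hzZ, hz⟩ := exists_lt_of_lt_csSup hZne (by linarith : σ - ε < σ)
      have hzσ : z ≤ σ := le_csSup hZbdd hzZ
      have := hΨlip σ z
      rw [hzZ.2] at this
      have habs : |σ - z| ≤ ε := by
        rw [abs_le]; constructor <;> linarith
      linarith
    rcases eq_or_lt_of_le (hΨnn σ hσS) with h | h
    · exact h.symm
    · have := hle (Ψ σ / 2) (by linarith)
      linarith
  have hΦσ : Φ σ = 0 := by
    rcases eq_or_lt_of_le hσmem.2 with heq | hlt
    · rw [heq]; exact hΦsp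
    · have hle : ∀ ε : ℝ, 0 < ε → Φ σ ≤ ε := by
        intro ε hε
        set s := min (σ + ε) sp with hsdef
        have hs1 : σ < s := lt_min (by linarith) hlt
        have hs2 : s ≤ sp := min_le_right _ _
        have hsmem : s ∈ Icc sm sp := ⟨hσmem.1.trans hs1.le, hs2⟩
        have hsS : s ∈ S := hIccS hsmem
        have hΨs : Ψ s ≠ 0 := by
          intro h0
          have : s ∈ Z := ⟨hsmem, h0⟩
          have := le_csSup hZbdd this
          rw [← hσdef] at this
          linarith
        have hΦs : Φ s = 0 := (hdichot s hsS).resolve_right hΨs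
        have := hΦlip σ s
        rw [hΦs] at this
        have habs : |σ - s| ≤ ε := by
          rw [abs_le]
          constructor <;> [linarith [min_le_left (σ + ε) sp]; linarith]
        linarith
      rcases eq_or_lt_of_le (hΦnn σ hσS) with h | h
      · exact h.symm
      · have := hle (Φ σ / 2) (by linarith)
        linarith
  -- attainment of the contact points
  have hlscL := lsc_line_sub (husc.mono hJL) c σ p₀
  have hlscR := lsc_line_sub (husc.mono hJR) c σ p₀
  obtain ⟨a, haI, ha⟩ := lsc_exists_min isCompact_Icc hJLne hlscL (c - |σ| - M)
    (line_sub_lower hbd hJL hp₀I c σ)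
  obtain ⟨b, hbI, hb⟩ := lsc_exists_min isCompact_Icc hJRne hlscR (c - |σ| - M)
    (line_sub_lower hbd hJR hp₀I c σ)
  have hga : g a = c + σ * (a - p₀) := by
    have h1 : c + σ * (a - p₀) - g a ≤ Φ σ := by
      apply le_csInf (hJLne.image _)
      rintro y ⟨x, hx, rfl⟩
      exact ha x hx
    have h2 := hΦle σ a haI
    rw [hΦσ] at h1 h2
    linarith
  have hgb : g b = c + σ * (b - p₀) := by
    have h1 : c + σ * (b - p₀) - g b ≤ Ψ σ := by
      apply le_csInf (hJRne.image _)
      rintro y ⟨x, hx, rfl⟩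
      exact hb x hx
    have h2 := hΨle σ b hbI
    rw [hΨσ] at h1 h2
    linarith
  -- assemble the chord
  obtain ⟨pm, pp, α, hpmI, hppI, hpmle, hpple, hα0, hα1, hmean, hval⟩ :
      ∃ pm pp α : ℝ, pm ∈ Icc (0:ℝ) 1 ∧ pp ∈ Icc (0:ℝ) 1 ∧ pm ≤ p₀ ∧ p₀ ≤ pp ∧
        0 ≤ α ∧ α ≤ 1 ∧ α * pm + (1 - α) * pp = p₀ ∧
        α * g pm + (1 - α) * g pp = c := by
    have hab : a ≤ b := haI.2.trans hbI.1
    rcases eq_or_lt_of_le hab with heq | hlt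
    · have hap : a = p₀ := le_antisymm haI.2 (heq ▸ hbI.1)
      refine ⟨p₀, p₀, 1, hp₀I, hp₀I, le_refl _, le_refl _, zero_le_one, le_refl _,
        by ring, ?_⟩
      have : g p₀ = c := by rw [← hap, hga, hap]; ring
      rw [this]; ring
    · set α := (b - p₀) / (b - a) with hα
      have hba : (0:ℝ) < b - a := by linarith
      refine ⟨a, b, α, hJL haI, hJR hbI, haI.2, hbI.1, ?_, ?_, ?_, ?_⟩
      · exact div_nonneg (by linarith [hbI.1]) hba.le
      · rw [hα, div_le_one hba]
        linarith [haI.2]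
      · rw [hα]; field_simp; ring
      · rw [hga, hgb, hα]; field_simp; ring
  refine ⟨pm, pp, α, hpmI, hppI, hpmle, hpple, ⟨hα0, hα1⟩, hmean, hval, ?_⟩
  refine ⟨_, rfl, ?_, ?_, ?_, ?_⟩
  · constructor
    rw [Measure.add_apply, Measure.smul_apply, Measure.smul_apply,
      Measure.dirac_apply_of_mem (mem_univ pm), Measure.dirac_apply_of_mem (mem_univ pp),
      smul_eq_mul, smul_eq_mul, mul_one, mul_one,
      ← ENNReal.ofReal_add hα0 (by linarith : (0:ℝ) ≤ 1 - α)]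
    norm_num
  · rw [Measure.add_apply, Measure.smul_apply, Measure.smul_apply,
      Measure.dirac_apply' _ measurableSet_Icc.compl,
      Measure.dirac_apply' _ measurableSet_Icc.compl]
    simp [indicator_of_notMem, hpmI, hppI]
  · rw [integral_two_point (fun p => p) pm pp α hα0 hα1]
    exact hmean
  · rw [integral_two_point g pm pp α hα0 hα1]
    exact hval
end
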